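/- arXiv:1507.01728 — 8 statements merged into one kernel-verified Lean document; each statement's English description precedes it below -/
import Mathlib

section
/- Let q be a prime power, 1 ≤ k < n, 0 ≤ c ≤ k−1, and let C ⊆ G_q(k,n) be an equidistant c-intersecting code. The following are equivalent: (1) C is a sunflower; (2) dim span(C^⊥) = n − c; (3) for all distinct A, B ∈ C, span(C^⊥) = A^⊥ + B^⊥. -/
open Submodule Module Set

/-- The orthogonal complement of a subspace of `Fin n → F` with respect to the
standard bilinear form `(x, y) ↦ ∑ i, x i * y i`. -/
def stdOrth {F : Type} [Field F] {n : ℕ} (U : Submodule F (Fin n → F)) :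
    Submodule F (Fin n → F) where
  carrier := {x | ∀ y ∈ U, ∑ i, x i * y i = 0}
  add_mem' := by
    intro a b ha hb y hy
    simp only [Set.mem_setOf_eq] at *
    simp [add_mul, Finset.sum_add_distrib, ha y hy, hb y hy]
  zero_mem' := by intro y hy; simp
  smul_mem' := by
    intro c a ha y hy
    simp only [Set.mem_setOf_eq] at *
    simp [smul_eq_mul, mul_assoc, ← Finset.mul_sum, ha y hy]

/-- An equidistant `c`-intersecting subspace code of constant dimension `k` in `F^n`:
a set of at least two `k`-dimensional subspaces, any two distinct members of which
intersect in dimension `c`. -/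
def IsEquidistantCode (F : Type) [Field F] (n k c : ℕ)
    (C : Set (Submodule F (Fin n → F))) : Prop :=
  2 ≤ C.ncard ∧ (∀ U ∈ C, Module.finrank F U = k) ∧
    ∀ U ∈ C, ∀ V ∈ C, U ≠ V → Module.finrank F ↥(U ⊓ V) = c

/-- A set of subspaces is a sunflower if there is a common center `Z` equal to the
intersection of any two distinct members. -/
def IsSunflower {F : Type} [Field F] {n : ℕ} (C : Set (Submodule F (Fin n → F))) : Prop :=
  ∃ Z : Submodule F (Fin n → F), ∀ U ∈ C, ∀ V ∈ C, U ≠ V → U ⊓ V = Z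

/-- `eMax F n k c` is the maximum cardinality of an equidistant `c`-intersecting
code of constant dimension `k` in `F^n`. -/
noncomputable def eMax (F : Type) [Field F] (n k c : ℕ) : ℕ :=
  sSup {m | ∃ C : Set (Submodule F (Fin n → F)), IsEquidistantCode F n k c C ∧ C.ncard = m}

/-!
Orthogonal complementation is an inclusion-reversing involution on the subspaces of `F^n`, so it
turns `span(C^⊥)` into `(⋂ C)^⊥`. Each of the three conditions then says that `⋂ C` equals
`A ∩ B` for all distinct `A, B ∈ C`: for (1) because, as `C` has two members, the center of a
sunflower lies in every codeword; for (3) by injectivity of `⊥`; and for (2) because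
`⋂ C ≤ A ∩ B` and the latter has dimension `c`.
-/

section StdOrth

variable {F : Type} [Field F] {n : ℕ}

lemma stdOrth_eq_orthogonal (U : Submodule F (Fin n → F)) :
    stdOrth U = LinearMap.BilinForm.orthogonal (dotProductBilin F F) U := by
  ext x
  simp only [LinearMap.BilinForm.mem_orthogonal_iff, dotProductBilin_apply_apply, dotProduct]
  exact forall₂_congr fun y _ => by simp only [mul_comm]

lemma dotProductBilin_isRefl :
    LinearMap.BilinForm.IsRefl (dotProductBilin F F : (Fin n → F) →ₗ[F] _) := fun x y h => by
  simpa only [dotProductBilin_apply_apply, dotProduct_comm] using h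

lemma dotProductBilin_nondegenerate :
    LinearMap.BilinForm.Nondegenerate (dotProductBilin F F : (Fin n → F) →ₗ[F] _) :=
  .ofSeparatingLeft fun x hx => dotProduct_eq_zero x hx

lemma finrank_stdOrth (U : Submodule F (Fin n → F)) :
    finrank F (stdOrth U) = n - finrank F U := by
  rw [stdOrth_eq_orthogonal,
    LinearMap.BilinForm.finrank_orthogonal dotProductBilin_nondegenerate, finrank_fin_fun]

@[simp]
lemma stdOrth_stdOrth (U : Submodule F (Fin n → F)) : stdOrth (stdOrth U) = U := by
  rw [stdOrth_eq_orthogonal, stdOrth_eq_orthogonal]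
  exact LinearMap.BilinForm.orthogonal_orthogonal dotProductBilin_nondegenerate
    dotProductBilin_isRefl U

lemma stdOrth_injective : Function.Injective (stdOrth : Submodule F (Fin n → F) → _) :=
  Function.LeftInverse.injective stdOrth_stdOrth

lemma stdOrth_le_stdOrth {U V : Submodule F (Fin n → F)} (h : U ≤ V) : stdOrth V ≤ stdOrth U :=
  fun _ hx y hy => hx y (h hy)

lemma le_stdOrth_comm {U V : Submodule F (Fin n → F)} : U ≤ stdOrth V ↔ V ≤ stdOrth U := by
  constructor <;> exact fun h x hx y hy => by simpa only [mul_comm] using h hy x hx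

lemma stdOrth_sSup (S : Set (Submodule F (Fin n → F))) :
    stdOrth (sSup S) = sInf (stdOrth '' S) := by
  refine le_antisymm (le_sInf ?_) ?_
  · rintro _ ⟨U, hU, rfl⟩
    exact stdOrth_le_stdOrth (le_sSup hU)
  · refine le_stdOrth_comm.mp (sSup_le fun U hU => le_stdOrth_comm.mp ?_)
    exact sInf_le ⟨U, hU, rfl⟩

lemma stdOrth_sInf (S : Set (Submodule F (Fin n → F))) :
    stdOrth (sInf S) = sSup (stdOrth '' S) := by
  apply stdOrth_injective
  rw [stdOrth_sSup, Set.image_image]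
  simp

lemma stdOrth_inf (A B : Submodule F (Fin n → F)) :
    stdOrth (A ⊓ B) = stdOrth A ⊔ stdOrth B := by
  simpa only [sInf_pair, Set.image_pair, sSup_pair] using stdOrth_sInf {A, B}

end StdOrth

section Code

variable {F : Type} [Field F] {n : ℕ} {C : Set (Submodule F (Fin n → F))}

lemma isSunflower_iff_forall_sInf_eq_inf (hC : C.Nontrivial) :
    IsSunflower C ↔ ∀ A ∈ C, ∀ B ∈ C, A ≠ B → sInf C = A ⊓ B := by
  refine ⟨fun ⟨Z, hZ⟩ A hA B hB hAB => ?_,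
    fun h => ⟨sInf C, fun A hA B hB hAB => (h A hA B hB hAB).symm⟩⟩
  have hZ_le : ∀ U ∈ C, Z ≤ U := fun U hU => by
    obtain ⟨V, hV, hVU⟩ := hC.exists_ne U
    exact hZ U hU V hV hVU.symm ▸ inf_le_left
  rw [hZ A hA B hB hAB]
  exact le_antisymm (hZ A hA B hB hAB ▸ le_inf (sInf_le hA) (sInf_le hB)) (le_sInf hZ_le)

namespace IsEquidistantCode

variable {k c : ℕ}

lemma nontrivial (hC : IsEquidistantCode F n k c C) : C.Nontrivial :=
  (Set.one_lt_ncard_iff_nontrivial_and_finite.mp hC.1).1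

lemma forall_sInf_eq_inf_iff (hC : IsEquidistantCode F n k c C) :
    (∀ A ∈ C, ∀ B ∈ C, A ≠ B → sInf C = A ⊓ B) ↔ finrank F ↥(sInf C) = c := by
  obtain ⟨A, hA, B, hB, hAB⟩ := hC.nontrivial
  refine ⟨fun h => h A hA B hB hAB ▸ hC.2.2 A hA B hB hAB, fun h U hU V hV hUV => ?_⟩
  refine Submodule.eq_of_le_of_finrank_eq (le_inf (sInf_le hU) (sInf_le hV)) ?_
  rw [h, hC.2.2 U hU V hV hUV]

lemma finrank_sInf_le (hC : IsEquidistantCode F n k c C) : finrank F ↥(sInf C) ≤ c := by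
  obtain ⟨A, hA, B, hB, hAB⟩ := hC.nontrivial
  rw [← hC.2.2 A hA B hB hAB]
  exact Submodule.finrank_mono (le_inf (sInf_le hA) (sInf_le hB))

lemma le_length (hC : IsEquidistantCode F n k c C) : c ≤ n := by
  obtain ⟨A, hA, B, hB, hAB⟩ := hC.nontrivial
  rw [← hC.2.2 A hA B hB hAB]
  exact (Submodule.finrank_le _).trans_eq (finrank_fin_fun F)

end IsEquidistantCode

end Code

theorem sunflower_tfae_general
    (F : Type) [Field F] (k n c : ℕ)
    (C : Set (Submodule F (Fin n → F))) (hC : IsEquidistantCode F n k c C) :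
    List.TFAE [IsSunflower C,
      Module.finrank F ↥(sSup (stdOrth '' C)) = n - c,
      ∀ A ∈ C, ∀ B ∈ C, A ≠ B → sSup (stdOrth '' C) = stdOrth A ⊔ stdOrth B] := by
  rw [← stdOrth_sInf, finrank_stdOrth]
  simp only [← stdOrth_inf, stdOrth_injective.eq_iff]
  have h_sunflower := isSunflower_iff_forall_sInf_eq_inf hC.nontrivial
  tfae_have 1 ↔ 2 := by
    rw [h_sunflower, hC.forall_sInf_eq_inf_iff]
    have := hC.finrank_sInf_le
    have := hC.le_length
    omega
  tfae_have 1 ↔ 3 := h_sunflower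
  tfae_finish

/-- For an equidistant `c`-intersecting code `C ⊆ G_q(k,n)` the following are
equivalent: (1) `C` is a sunflower; (2) `dim span(C^⊥) = n - c`;
(3) for all distinct `A, B ∈ C`, `span(C^⊥) = A^⊥ + B^⊥`. -/
theorem sunflower_tfae
    (q : ℕ) (hq : IsPrimePow q) (F : Type) [Field F] [Fintype F]
    (hF : Fintype.card F = q) (k n c : ℕ) (hk : 1 ≤ k) (hkn : k < n) (hc : c ≤ k - 1)
    (C : Set (Submodule F (Fin n → F))) (hC : IsEquidistantCode F n k c C) :
    List.TFAE [IsSunflower C,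
      Module.finrank F ↥(sSup (stdOrth '' C)) = n - c,
      ∀ A ∈ C, ∀ B ∈ C, A ≠ B → sSup (stdOrth '' C) = stdOrth A ⊔ stdOrth B] :=
  sunflower_tfae_general F k n c C hC
end

section
/- Let q be a prime power, 1 ≤ k < n, and let C ⊆ G_q(k,n) be an equidistant (k−1)-intersecting code (i.e., dim(U ∩ V) = k−1 for all distinct U, V ∈ C). Then either C is a sunflower, or C^⊥ is a sunflower. -/
open Submodule Module Set

lemma mem_stdOrth {F : Type} [Field F] {n : ℕ} {U : Submodule F (Fin n → F)} {x : Fin n → F} :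
    x ∈ stdOrth U ↔ ∀ y ∈ U, ∑ i, x i * y i = 0 := Iff.rfl

lemma stdOrth_sup {F : Type} [Field F] {n : ℕ} (U V : Submodule F (Fin n → F)) :
    stdOrth U ⊓ stdOrth V = stdOrth (U ⊔ V) := by
  ext x
  simp only [Submodule.mem_inf, mem_stdOrth]
  constructor
  · rintro ⟨h1, h2⟩ y hy
    obtain ⟨u, hu, v, hv, rfl⟩ := Submodule.mem_sup.mp hy
    simp only [Pi.add_apply, mul_add, Finset.sum_add_distrib, h1 u hu, h2 v hv, add_zero]
  · intro h
    exact ⟨fun y hy => h y (Submodule.mem_sup_left hy),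
      fun y hy => h y (Submodule.mem_sup_right hy)⟩

/-- An equidistant `(k-1)`-intersecting code is either a sunflower, or its
orthogonal is a sunflower. -/
theorem extremal_code_sunflower_or_orth_sunflower
    (q : ℕ) (hq : IsPrimePow q) (F : Type) [Field F] [Fintype F]
    (hF : Fintype.card F = q) (k n : ℕ) (hk : 1 ≤ k) (hkn : k < n)
    (C : Set (Submodule F (Fin n → F))) (hC : IsEquidistantCode F n k (k - 1) C) :
    IsSunflower C ∨ IsSunflower (stdOrth '' C) := by
  classical
  obtain ⟨hcard, hdim, hint⟩ := hC
  have hCfin : C.Finite := Set.finite_of_ncard_ne_zero (by omega)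
  obtain ⟨U0, V0, hU0, hV0, hne0⟩ := (Set.one_lt_ncard_iff hCfin).mp (by omega)
  -- dimension of the sup of two distinct members
  have L1 : ∀ U ∈ C, ∀ V ∈ C, U ≠ V → Module.finrank F ↥(U ⊔ V) = k + 1 := by
    intro U hU V hV hUV
    have h := Submodule.finrank_sup_add_finrank_inf_eq U V
    rw [hint U hU V hV hUV, hdim U hU, hdim V hV] at h
    omega
  -- two distinct hyperplanes of U span U
  have L2 : ∀ U ∈ C, ∀ A ∈ C, ∀ B ∈ C, U ≠ A → U ≠ B →
      U ⊓ A ≠ U ⊓ B → U ≤ A ⊔ B := by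
    intro U hU A hA B hB hUA hUB hne
    have h1 : Module.finrank F ↥(U ⊓ A) = k - 1 := hint U hU A hA hUA
    have h2 : Module.finrank F ↥(U ⊓ B) = k - 1 := hint U hU B hB hUB
    have hlt : (U ⊓ A) < (U ⊓ A) ⊔ (U ⊓ B) := by
      refine lt_of_le_of_ne le_sup_left ?_
      intro h
      have hle : U ⊓ B ≤ U ⊓ A := h ▸ le_sup_right
      exact hne (Submodule.eq_of_le_of_finrank_le hle (by rw [h1, h2])).symm
    have hfin := Submodule.finrank_lt_finrank_of_lt hlt
    rw [h1] at hfin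
    have hle : (U ⊓ A) ⊔ (U ⊓ B) ≤ U := sup_le inf_le_left inf_le_left
    have hequ : (U ⊓ A) ⊔ (U ⊓ B) = U :=
      Submodule.eq_of_le_of_finrank_le hle (by rw [hdim U hU]; omega)
    rw [← hequ]
    exact sup_le (inf_le_right.trans le_sup_left) (inf_le_right.trans le_sup_right)
  by_cases htriple : ∃ A ∈ C, ∃ B ∈ C, ∃ D ∈ C,
      A ≠ B ∧ A ≠ D ∧ B ≠ D ∧ A ⊓ B ≠ A ⊓ D
  · right
    obtain ⟨A, hA, B, hB, D, hD, hAB, hAD, hBD, hneq⟩ := htriple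
    set T := B ⊔ D with hTdef
    have hT : Module.finrank F ↥T = k + 1 := L1 B hB D hD hBD
    have hAT : A ≤ T := L2 A hA B hB D hD hAB hAD hneq
    have hsupT : ∀ X ∈ C, ∀ Y ∈ C, X ≠ Y → X ≤ T → Y ≤ T → X ⊔ Y = T := by
      intro X hX Y hY hXY hXT hYT
      exact Submodule.eq_of_le_of_finrank_le (sup_le hXT hYT)
        (by rw [hT, L1 X hX Y hY hXY])
    have hsub : ∀ U ∈ C, U ≤ T := by
      intro U hU
      by_cases hUB : U = B
      · exact hUB ▸ le_sup_left
      by_cases hUD : U = D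
      · exact hUD ▸ le_sup_right
      by_cases hUA : U = A
      · exact hUA ▸ hAT
      -- U is distinct from A, B, D
      by_cases h1 : U ⊓ A = U ⊓ B
      · by_cases h2 : U ⊓ A = U ⊓ D
        · exfalso
          apply hneq
          have hUAd : Module.finrank F ↥(U ⊓ A) = k - 1 := hint U hU A hA hUA
          have e1 : U ⊓ A = A ⊓ B := by
            refine Submodule.eq_of_le_of_finrank_le
              (le_inf inf_le_right (h1 ▸ inf_le_right)) ?_
            rw [hint A hA B hB hAB, hUAd]
          have e2 : U ⊓ A = A ⊓ D := by
            refine Submodule.eq_of_le_of_finrank_le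
              (le_inf inf_le_right (h2 ▸ inf_le_right)) ?_
            rw [hint A hA D hD hAD, hUAd]
          rw [← e1, ← e2]
        · have := L2 U hU A hA D hD hUA hUD h2
          rwa [hsupT A hA D hD hAD hAT (le_sup_right)] at this
      · have := L2 U hU A hA B hB hUA hUB h1
        rwa [hsupT A hA B hB hAB hAT (le_sup_left)] at this
    refine ⟨stdOrth T, ?_⟩
    rintro _ ⟨U, hU, rfl⟩ _ ⟨V, hV, rfl⟩ hne
    have hUV : U ≠ V := fun h => hne (by rw [h])
    rw [stdOrth_sup U V, hsupT U hU V hV hUV (hsub U hU) (hsub V hV)]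
  · left
    push_neg at htriple
    have key : ∀ A ∈ C, ∀ B ∈ C, ∀ D ∈ C, A ≠ B → A ≠ D → A ⊓ B = A ⊓ D := by
      intro A hA B hB D hD hAB hAD
      by_cases hBD : B = D
      · rw [hBD]
      · exact htriple A hA B hB D hD hAB hAD hBD
    have pair : ∀ A ∈ C, ∀ B ∈ C, ∀ X ∈ C, ∀ Y ∈ C, A ≠ B → X ≠ Y → A ⊓ B = X ⊓ Y := by
      intro A hA B hB X hX Y hY hAB hXY
      by_cases hAX : A = X
      · subst hAX
        by_cases hBY : B = Y
        · rw [hBY]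
        · exact key A hA B hB Y hY hAB hXY
      · by_cases hAY : A = Y
        · subst hAY
          rw [inf_comm X A]
          exact key A hA B hB X hX hAB hAX
        · have h1 : A ⊓ B = A ⊓ X := key A hA B hB X hX hAB hAX
          have h3 : X ⊓ A = X ⊓ Y := key X hX A hA Y hY (fun h => hAX h.symm) hXY
          rw [h1, inf_comm A X, h3]
    exact ⟨U0 ⊓ V0, fun U hU V hV hUV => pair U hU V hV U0 hU0 V0 hV0 hUV hne0⟩
end

section
/- Let q be a prime power, 1 ≤ k < n, and let C ⊆ G_q(k,n) be an equidistant (k−1)-intersecting code that is not a sunflower. Then there exists a (k+1)-dimensional subspace W ⊆ F_q^n such that U ⊆ W for every U ∈ C. -/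
open Submodule Module Set

lemma aux_le_sup {F : Type} [Field F] {n k : ℕ} (T X Y : Submodule F (Fin n → F))
    (hT : Module.finrank F T = k) (h1 : Module.finrank F ↥(T ⊓ X) = k - 1)
    (h2 : Module.finrank F ↥(T ⊓ Y) = k - 1) (hne : T ⊓ X ≠ T ⊓ Y) : T ≤ X ⊔ Y := by
  have hS : (T ⊓ X) ⊔ (T ⊓ Y) = T := by
    have hlt : T ⊓ X < (T ⊓ X) ⊔ (T ⊓ Y) := by
      refine lt_of_le_of_ne le_sup_left ?_
      intro h
      exact hne ((Submodule.eq_of_le_of_finrank_eq (h ▸ le_sup_right)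
        (h2.trans h1.symm)).symm)
    have hrk := Submodule.finrank_lt_finrank_of_lt hlt
    exact Submodule.eq_of_le_of_finrank_le (S₁ := (T ⊓ X) ⊔ (T ⊓ Y)) (S₂ := T)
      (sup_le inf_le_left inf_le_left) (by omega)
  calc T = (T ⊓ X) ⊔ (T ⊓ Y) := hS.symm
    _ ≤ X ⊔ Y := sup_le (inf_le_right.trans le_sup_left) (inf_le_right.trans le_sup_right)

lemma extract_triple {F : Type} [Field F] {n : ℕ} {C : Set (Submodule F (Fin n → F))}
    (h2 : 2 ≤ C.ncard) (hns : ¬ IsSunflower C) :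
    ∃ X ∈ C, ∃ Y ∈ C, ∃ Z ∈ C, X ≠ Y ∧ X ≠ Z ∧ Y ≠ Z ∧ X ⊓ Y ≠ X ⊓ Z := by
  have hfin : C.Finite := by
    by_contra h
    rw [Set.Infinite.ncard h] at h2; omega
  obtain ⟨U, hU, V, hV, hUV⟩ := (Set.one_lt_ncard hfin).mp h2
  clear hfin
  simp only [IsSunflower, not_exists] at hns
  have h' := hns (U ⊓ V)
  push_neg at h'
  obtain ⟨A, hA, B, hB, hAB, hne⟩ := h'
  have key : ∀ X Y Z : Submodule F (Fin n → F), X ∈ C → Y ∈ C → Z ∈ C →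
      X ≠ Y → X ≠ Z → X ⊓ Y ≠ X ⊓ Z →
      ∃ X ∈ C, ∃ Y ∈ C, ∃ Z ∈ C, X ≠ Y ∧ X ≠ Z ∧ Y ≠ Z ∧ X ⊓ Y ≠ X ⊓ Z := by
    intro X Y Z hX hY hZ hXY hXZ hI
    have hYZ : Y ≠ Z := fun h => hI (h ▸ rfl)
    exact ⟨X, hX, Y, hY, Z, hZ, hXY, hXZ, hYZ, hI⟩
  by_cases hAU : A = U
  · rw [hAU] at hAB hne
    exact key U B V hU hB hV hAB hUV hne
  by_cases hAV : A = V
  · rw [hAV] at hAB hne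
    refine key V B U hV hB hU hAB hUV.symm ?_
    rw [inf_comm V U]; exact hne
  by_cases hBU : B = U
  · rw [hBU] at hAB hne
    refine key U A V hU hA hV hAB.symm hUV ?_
    rw [inf_comm U A]; exact hne
  by_cases hBV : B = V
  · rw [hBV] at hAB hne
    refine key V A U hV hA hU hAB.symm hUV.symm ?_
    rw [inf_comm V A, inf_comm V U]; exact hne
  by_cases hcmp : A ⊓ U = A ⊓ B
  · refine key U A V hU hA hV (fun h => hAU h.symm) hUV ?_
    rw [inf_comm U A, hcmp]; exact hne
  · exact key A U B hA hU hB hAU hAB hcmp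

/-- An equidistant `(k-1)`-intersecting code which is not a sunflower is contained
in a fixed `(k+1)`-dimensional subspace. -/
theorem extremal_nonsunflower_in_hyperplane
    (q : ℕ) (hq : IsPrimePow q) (F : Type) [Field F] [Fintype F]
    (hF : Fintype.card F = q) (k n : ℕ) (hk : 1 ≤ k) (hkn : k < n)
    (C : Set (Submodule F (Fin n → F))) (hC : IsEquidistantCode F n k (k - 1) C)
    (hns : ¬ IsSunflower C) :
    ∃ W : Submodule F (Fin n → F), Module.finrank F W = k + 1 ∧ ∀ U ∈ C, U ≤ W := by
  obtain ⟨h2, hdim, hint⟩ := hC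
  obtain ⟨X, hX, Y, hY, Z, hZ, hXY, hXZ, hYZ, hI⟩ := extract_triple h2 hns
  refine ⟨Y ⊔ Z, ?_, ?_⟩
  · have := Submodule.finrank_sup_add_finrank_inf_eq Y Z
    rw [hdim Y hY, hdim Z hZ, hint Y hY Z hZ hYZ] at this
    omega
  · have hXW : X ≤ Y ⊔ Z := aux_le_sup X Y Z (hdim X hX)
      (hint X hX Y hY hXY) (hint X hX Z hZ hXZ) hI
    intro T hT
    by_cases hTX : T = X
    · exact hTX ▸ hXW
    by_cases hTY : T = Y
    · exact hTY ▸ le_sup_left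
    by_cases hTZ : T = Z
    · exact hTZ ▸ le_sup_right
    by_cases hTXY : T ⊓ X = T ⊓ Y
    · by_cases hTXZ : T ⊓ X = T ⊓ Z
      · exfalso
        have hS1 : T ⊓ X ≤ X ⊓ Y := le_inf inf_le_right (hTXY ▸ inf_le_right)
        have hS2 : T ⊓ X ≤ X ⊓ Z := le_inf inf_le_right (hTXZ ▸ inf_le_right)
        have e1 : T ⊓ X = X ⊓ Y := Submodule.eq_of_le_of_finrank_eq hS1
          (by rw [hint T hT X hX hTX, hint X hX Y hY hXY])
        have e2 : T ⊓ X = X ⊓ Z := Submodule.eq_of_le_of_finrank_eq hS2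
          (by rw [hint T hT X hX hTX, hint X hX Z hZ hXZ])
        exact hI (e1 ▸ e2)
      · have : T ≤ X ⊔ Z := aux_le_sup T X Z (hdim T hT)
          (hint T hT X hX hTX) (hint T hT Z hZ hTZ) hTXZ
        exact this.trans (sup_le hXW le_sup_right)
    · have : T ≤ X ⊔ Y := aux_le_sup T X Y (hdim T hT)
        (hint T hT X hX hTX) (hint T hT Y hY hTY) hTXY
      exact this.trans (sup_le hXW le_sup_left)
end

section
/- Let q be a prime power, 1 ≤ k < n, and let C ⊆ G_q(k,n) be an equidistant (k−1)-intersecting code with |C| > (q^{k+1} − 1)/(q − 1). Then C is a sunflower. -/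
open Submodule Module Set

set_option maxHeartbeats 1000000 in
set_option synthInstance.maxHeartbeats 400000 in
/-- Counting lemma: the number of lines (1-dimensional subspaces) of a finite
module `M` over a finite field `F` times `|F| - 1` is at most `|M| - 1`. -/
lemma line_count_le {F : Type} [Field F] [Fintype F] (M : Type) [AddCommGroup M] [Module F M]
    [Fintype M] [FiniteDimensional F M] :
    {ℓ : Submodule F M | Module.finrank F ℓ = 1}.ncard * (Fintype.card F - 1)
      ≤ Fintype.card M - 1 := by
  classical
  have hfin : Finite (Submodule F M) :=
    Finite.of_injective _ (SetLike.coe_injective (A := Submodule F M))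
  have hset : {ℓ : Submodule F M | Module.finrank F ℓ = 1}.Finite := Set.toFinite _
  set L : Finset (Submodule F M) := hset.toFinset with hL
  set f : Submodule F M → Finset M :=
    fun ℓ => (Finset.univ.filter (fun x => x ∈ ℓ)).erase 0 with hf
  have hmem : ∀ ℓ, ∀ x ∈ f ℓ, x ≠ 0 ∧ x ∈ ℓ := by
    intro ℓ x hx
    simp only [hf, Finset.mem_erase, Finset.mem_filter, Finset.mem_univ, true_and] at hx
    exact hx
  have hrank : ∀ ℓ ∈ L, Module.finrank F ℓ = 1 := by
    intro ℓ hℓ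
    simpa [hL, Set.Finite.mem_toFinset] using hℓ
  have hcardf : ∀ ℓ ∈ L, (f ℓ).card = Fintype.card F - 1 := by
    intro ℓ hℓ
    have h0 : (0 : M) ∈ Finset.univ.filter (fun x => x ∈ ℓ) := by simp [ℓ.zero_mem]
    have hcs : (Finset.univ.filter (fun x : M => x ∈ ℓ)).card = Fintype.card ℓ :=
      (Fintype.card_subtype _).symm
    rw [hf]
    simp only []
    rw [Finset.card_erase_of_mem h0, hcs,
      card_eq_pow_finrank (K := F) (V := ℓ), hrank ℓ hℓ, pow_one]
  have hspan : ∀ ℓ ∈ L, ∀ x : M, x ≠ 0 → x ∈ ℓ → ℓ = (F ∙ x) := by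
    intro ℓ hℓ x hx0 hxℓ
    refine (Submodule.eq_of_le_of_finrank_eq ((Submodule.span_singleton_le_iff_mem x ℓ).2 hxℓ)
      ?_).symm
    rw [finrank_span_singleton hx0, hrank ℓ hℓ]
  have hdisj : ∀ ℓ₁ ∈ L, ∀ ℓ₂ ∈ L, ℓ₁ ≠ ℓ₂ → Disjoint (f ℓ₁) (f ℓ₂) := by
    intro ℓ₁ h1 ℓ₂ h2 hne
    rw [Finset.disjoint_left]
    intro x hx1 hx2
    obtain ⟨hx0, hxl1⟩ := hmem ℓ₁ x hx1
    obtain ⟨-, hxl2⟩ := hmem ℓ₂ x hx2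
    exact hne ((hspan ℓ₁ h1 x hx0 hxl1).trans (hspan ℓ₂ h2 x hx0 hxl2).symm)
  have hsub : L.biUnion f ⊆ Finset.univ.erase 0 := by
    intro x hx
    obtain ⟨ℓ, -, hxf⟩ := Finset.mem_biUnion.1 hx
    exact Finset.mem_erase.2 ⟨(hmem ℓ x hxf).1, Finset.mem_univ x⟩
  have hbu : (L.biUnion f).card = L.card * (Fintype.card F - 1) := by
    rw [Finset.card_biUnion hdisj]
    rw [Finset.sum_congr rfl hcardf, Finset.sum_const, smul_eq_mul]
  have hcard2 : (Finset.univ.erase (0 : M)).card = Fintype.card M - 1 := by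
    rw [Finset.card_erase_of_mem (Finset.mem_univ 0), Finset.card_univ]
  calc {ℓ : Submodule F M | Module.finrank F ℓ = 1}.ncard * (Fintype.card F - 1)
      = L.card * (Fintype.card F - 1) := by rw [Set.ncard_eq_toFinset_card _ hset]
    _ = (L.biUnion f).card := hbu.symm
    _ ≤ (Finset.univ.erase (0 : M)).card := Finset.card_le_card hsub
    _ = Fintype.card M - 1 := hcard2

set_option maxHeartbeats 1000000 in
set_option synthInstance.maxHeartbeats 400000 in
/-- In a `(k+1)`-dimensional space over a finite field `F`, the number of
`k`-dimensional subspaces times `|F| - 1` is at most `|F|^(k+1) - 1`. -/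
lemma hyperplane_count {F : Type} [Field F] [Fintype F] (V : Type) [AddCommGroup V]
    [Module F V] [Finite V] (k : ℕ) (hV : Module.finrank F V = k + 1) :
    {X : Submodule F V | Module.finrank F ↥X = k}.ncard * (Fintype.card F - 1)
      ≤ Fintype.card F ^ (k + 1) - 1 := by
  classical
  haveI : Finite (Module.Dual F V) :=
    Finite.of_injective _ (DFunLike.coe_injective (F := Module.Dual F V))
  letI : Fintype (Module.Dual F V) := Fintype.ofFinite _
  haveI : Finite (Submodule F (Module.Dual F V)) :=
    Finite.of_injective _ (SetLike.coe_injective (A := Submodule F (Module.Dual F V)))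
  have hdual : Module.finrank F (Module.Dual F V) = k + 1 := by
    rw [Subspace.dual_finrank_eq, hV]
  have hcardD : Fintype.card (Module.Dual F V) = Fintype.card F ^ (k + 1) := by
    rw [card_eq_pow_finrank (K := F) (V := Module.Dual F V), hdual]
  have hmaps : ∀ X ∈ {X : Submodule F V | Module.finrank F ↥X = k},
      Submodule.dualAnnihilator X ∈
        {ℓ : Submodule F (Module.Dual F V) | Module.finrank F ↥ℓ = 1} := by
    intro X hX
    rw [Set.mem_setOf_eq] at hX ⊢
    have hq1 := Submodule.finrank_quotient_add_finrank X
    have hqe : Module.finrank F (V ⧸ X) = Module.finrank F ↥(Submodule.dualAnnihilator X) :=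
      LinearEquiv.finrank_eq (Subspace.quotEquivAnnihilator X)
    rw [← hqe]
    rw [hX, hV] at hq1
    omega
  have hinj : Set.InjOn (fun X : Submodule F V => Submodule.dualAnnihilator X)
      {X : Submodule F V | Module.finrank F ↥X = k} := by
    intro X hX Y hY hXY
    exact Subspace.dualAnnihilator_inj.1 hXY
  have hle := Set.ncard_le_ncard_of_injOn
    (fun X : Submodule F V => Submodule.dualAnnihilator X) hmaps hinj
    (Set.toFinite {ℓ : Submodule F (Module.Dual F V) | Module.finrank F ↥ℓ = 1})
  have hcnt := line_count_le (F := F) (Module.Dual F V)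
  rw [hcardD] at hcnt
  calc {X : Submodule F V | Module.finrank F ↥X = k}.ncard * (Fintype.card F - 1)
      ≤ {ℓ : Submodule F (Module.Dual F V) | Module.finrank F ↥ℓ = 1}.ncard
          * (Fintype.card F - 1) := Nat.mul_le_mul_right _ hle
    _ ≤ Fintype.card F ^ (k + 1) - 1 := hcnt

set_option maxHeartbeats 1000000 in
set_option synthInstance.maxHeartbeats 400000 in
/-- An equidistant `(k-1)`-intersecting code of cardinality larger than
`(q^{k+1} - 1)/(q - 1)` is a sunflower. -/
theorem extremal_large_code_is_sunflower
    (q : ℕ) (hq : IsPrimePow q) (F : Type) [Field F] [Fintype F]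
    (hF : Fintype.card F = q) (k n : ℕ) (hk : 1 ≤ k) (hkn : k < n)
    (C : Set (Submodule F (Fin n → F))) (hC : IsEquidistantCode F n k (k - 1) C)
    (hcard : (q ^ (k + 1) - 1) / (q - 1) < C.ncard) :
    IsSunflower C := by
  classical
  obtain ⟨h2, hdim, hint⟩ := hC
  by_contra hsun
  rw [IsSunflower, not_exists] at hsun
  push_neg at hsun
  -- extract two distinct elements
  have hCfin : C.Finite := Set.toFinite C
  obtain ⟨A, B, hA, hB, hAB⟩ := (Set.one_lt_ncard_iff hCfin).1 (by omega)
  -- Step 1: find a triple U V W with U ⊓ V ≠ U ⊓ W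
  have htriple : ∃ U ∈ C, ∃ V ∈ C, ∃ W ∈ C,
      U ≠ V ∧ U ≠ W ∧ V ≠ W ∧ U ⊓ V ≠ U ⊓ W := by
    by_contra htrip
    push_neg at htrip
    have key : ∀ U ∈ C, ∀ V ∈ C, U ≠ V → U ⊓ V = A ⊓ B := by
      intro U hU V hV hUV
      by_cases hUA : U = A
      · subst hUA
        by_cases hVB : V = B
        · subst hVB; rfl
        · exact htrip U hU V hV B hB hUV hAB hVB
      · by_cases hUB : U = B
        · subst hUB
          by_cases hVA : V = A
          · subst hVA; rw [inf_comm]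
          · rw [htrip U hU V hV A hA hUV hAB.symm hVA, inf_comm]
        · by_cases hVA : V = A
          · subst hVA
            rw [inf_comm, htrip V hV U hU B hB (Ne.symm hUV) hAB hUB]
          · by_cases hVB : V = B
            · subst hVB
              rw [inf_comm U V, htrip V hV U hU A hA (Ne.symm hUV) hAB.symm hUA]
              exact inf_comm V A
            · rw [htrip U hU V hV A hA hUV hUA hVA, inf_comm,
                htrip A hA U hU B hB (fun h => hUA h.symm) hAB hUB]
    obtain ⟨U, hU, V, hV, hUV, hne⟩ := hsun (A ⊓ B)
    exact hne (key U hU V hV hUV)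
  obtain ⟨U, hU, V, hV, W, hW, hUV, hUW, hVW, hI⟩ := htriple
  -- basic dimension facts
  have dU : Module.finrank F U = k := hdim U hU
  have dV : Module.finrank F V = k := hdim V hV
  have dW : Module.finrank F W = k := hdim W hW
  have dUV : Module.finrank F ↥(U ⊓ V) = k - 1 := hint U hU V hV hUV
  have dUW : Module.finrank F ↥(U ⊓ W) = k - 1 := hint U hU W hW hUW
  have dVW : Module.finrank F ↥(V ⊓ W) = k - 1 := hint V hV W hW hVW
  -- Step 2 : U ≤ V ⊔ W
  have hsupU : (U ⊓ V) ⊔ (U ⊓ W) = U := by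
    have hle : (U ⊓ V) ⊔ (U ⊓ W) ≤ U := sup_le inf_le_left inf_le_left
    rcases lt_or_ge (Module.finrank F ↥((U ⊓ V) ⊔ (U ⊓ W))) k with hlt | hge
    · exfalso
      have hm1 : Module.finrank F ↥(U ⊓ V) ≤ Module.finrank F ↥((U ⊓ V) ⊔ (U ⊓ W)) :=
        Submodule.finrank_mono le_sup_left
      have hm2 : Module.finrank F ↥(U ⊓ W) ≤ Module.finrank F ↥((U ⊓ V) ⊔ (U ⊓ W)) :=
        Submodule.finrank_mono le_sup_right
      have e1 : U ⊓ V = (U ⊓ V) ⊔ (U ⊓ W) :=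
        Submodule.eq_of_le_of_finrank_eq le_sup_left (by omega)
      have e2 : U ⊓ W = (U ⊓ V) ⊔ (U ⊓ W) :=
        Submodule.eq_of_le_of_finrank_eq le_sup_right (by omega)
      exact hI (e1.trans e2.symm)
    · exact Submodule.eq_of_le_of_finrank_le hle (by omega)
  set S : Submodule F (Fin n → F) := V ⊔ W with hS
  have hUS : U ≤ S := by
    rw [← hsupU]
    exact sup_le (inf_le_right.trans le_sup_left) (inf_le_right.trans le_sup_right)
  have hVS : V ≤ S := le_sup_left
  have hWS : W ≤ S := le_sup_right
  have dS : Module.finrank F ↥S = k + 1 := by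
    have := Submodule.finrank_sup_add_finrank_inf_eq V W
    rw [dV, dW, dVW] at this
    rw [hS]; omega
  -- Step 3 : every element of C lies in S
  have hXS : ∀ X ∈ C, X ≤ S := by
    intro X hX
    by_cases hXU : X = U
    · subst hXU; exact hUS
    by_cases hXV : X = V
    · subst hXV; exact hVS
    by_cases hXW : X = W
    · subst hXW; exact hWS
    by_contra hXnS
    have hlt : S < X ⊔ S :=
      lt_of_le_of_ne le_sup_right fun h => hXnS (le_sup_left.trans h.ge)
    have h1 : Module.finrank F ↥S < Module.finrank F ↥(X ⊔ S) :=
      Submodule.finrank_lt_finrank_of_lt hlt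
    have h2 := Submodule.finrank_sup_add_finrank_inf_eq X S
    rw [hdim X hX, dS] at h2
    have hXSdim : Module.finrank F ↥(X ⊓ S) ≤ k - 1 := by omega
    have dXU : Module.finrank F ↥(X ⊓ U) = k - 1 := hint X hX U hU hXU
    have dXV : Module.finrank F ↥(X ⊓ V) = k - 1 := hint X hX V hV hXV
    have dXW : Module.finrank F ↥(X ⊓ W) = k - 1 := hint X hX W hW hXW
    have eXU : X ⊓ U = X ⊓ S :=
      Submodule.eq_of_le_of_finrank_le (inf_le_inf_left X hUS) (by omega)
    have eXV : X ⊓ V = X ⊓ S :=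
      Submodule.eq_of_le_of_finrank_le (inf_le_inf_left X hVS) (by omega)
    have eXW : X ⊓ W = X ⊓ S :=
      Submodule.eq_of_le_of_finrank_le (inf_le_inf_left X hWS) (by omega)
    have hYUV : X ⊓ S ≤ U ⊓ V := by
      rw [← eXU]
      refine le_inf inf_le_right ?_
      rw [eXU, ← eXV]; exact inf_le_right
    have hYUW : X ⊓ S ≤ U ⊓ W := by
      rw [← eXU]
      refine le_inf inf_le_right ?_
      rw [eXU, ← eXW]; exact inf_le_right
    have eUV : X ⊓ S = U ⊓ V :=
      Submodule.eq_of_le_of_finrank_eq hYUV (by rw [← eXU, dXU, dUV])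
    have eUW : X ⊓ S = U ⊓ W :=
      Submodule.eq_of_le_of_finrank_eq hYUW (by rw [← eXU, dXU, dUW])
    exact hI (eUV.symm.trans eUW)
  -- Step 4 : inject C into k-dimensional subspaces of S and count
  have hq2 : 2 ≤ q := hq.two_le
  have hmaps : ∀ X ∈ C, Submodule.comap S.subtype X ∈
      {Y : Submodule F ↥S | Module.finrank F ↥Y = k} := by
    intro X hX
    have h2 : Module.finrank F ↥(Submodule.comap S.subtype X) = Module.finrank F ↥X :=
      LinearEquiv.finrank_eq (Submodule.comapSubtypeEquivOfLe (hXS X hX))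
    rw [Set.mem_setOf_eq, h2, hdim X hX]
  have hinj : Set.InjOn (fun X => Submodule.comap S.subtype X) C := by
    intro X hX Y hY hXY
    have hXY' : Submodule.comap S.subtype X = Submodule.comap S.subtype Y := hXY
    have hmX := Submodule.map_comap_subtype S X
    have hmY := Submodule.map_comap_subtype S Y
    rw [hXY'] at hmX
    have hSXY : S ⊓ X = S ⊓ Y := hmX.symm.trans hmY
    rwa [inf_of_le_right (hXS X hX), inf_of_le_right (hXS Y hY)] at hSXY
  have hCle : C.ncard ≤ {Y : Submodule F ↥S | Module.finrank F ↥Y = k}.ncard := by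
    haveI : Finite (Submodule F ↥S) :=
      Finite.of_injective _ (SetLike.coe_injective (A := Submodule F ↥S))
    exact Set.ncard_le_ncard_of_injOn _ hmaps hinj (Set.toFinite _)
  have hcount := hyperplane_count (F := F) ↥S k dS
  rw [hF] at hcount
  have hbound : {Y : Submodule F ↥S | Module.finrank F ↥Y = k}.ncard
      ≤ (q ^ (k + 1) - 1) / (q - 1) := by
    rw [Nat.le_div_iff_mul_le (by omega)]
    exact hcount
  omega
end

section
/- Let q be a prime power, 1 ≤ k < n, and let S ⊆ G_q(k,n) be a sunflower with center of dimension c, 0 ≤ c ≤ k−1. Let r be the remainder of the division of n−c by k−c. If |S| ≥ (q^{n−c} − q^r)/(q^{k−c} − 1) − q^r + 1, then span(S) = F_q^n. -/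
open Submodule Module Set

/-!
If the span `W` of the sunflower were a proper subspace, it would have dimension at most `n - 1`.
The petals minus the center, `U \ Z`, are pairwise disjoint subsets of `W \ Z`, so
`|S| (q^k - q^c) ≤ q^(n-1) - q^c`, i.e. `|S| (q^(k-c) - 1) ≤ q^(n-c-1) - 1`. Two petals already
span a space of dimension `2k - c`, so `n - c ≥ 2(k - c) + 1`; writing `n - c = a(k - c) + r` with
`a ≥ 2`, the assumed lower bound on `|S|` equals `q^r (q^(k-c) + ⋯ + q^((a-1)(k-c))) + 1`, and
multiplying it by `q^(k-c) - 1` gives `q^(n-c) - q^(r+k-c) + q^(k-c) - 1 > q^(n-c-1) - 1`.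
-/

theorem Nat.pow_sub_pow_eq_mul (q : ℕ) {c k : ℕ} (h : c ≤ k) :
    q ^ k - q ^ c = q ^ c * (q ^ (k - c) - 1) := by
  rw [Nat.mul_sub_one, ← pow_add, Nat.add_sub_cancel' h]

theorem Nat.pow_sub_pow_mod_div_eq {q d : ℕ} (hq : 2 ≤ q) (hd : 0 < d) (N : ℕ) :
    (q ^ N - q ^ (N % d)) / (q ^ d - 1) =
      q ^ (N % d) * ∑ i ∈ Finset.range (N / d), (q ^ d) ^ i := by
  have hx : 2 ≤ q ^ d := hq.trans (Nat.le_self_pow hd.ne' q)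
  have hgeom := geom_sum_mul_add (q ^ d - 1) (N / d)
  rw [Nat.sub_add_cancel (by omega)] at hgeom
  refine Nat.div_eq_of_eq_mul_left (by omega) ?_
  rw [mul_assoc, Nat.eq_sub_of_add_eq hgeom, Nat.mul_sub_one, ← pow_mul, ← pow_add,
    Nat.mod_add_div]

theorem Nat.pow_pred_sub_one_lt_mul {q d N : ℕ} (hq : 2 ≤ q) (hd : 0 < d) (hN : 2 * d ≤ N) :
    q ^ (N - 1) - 1 <
      ((q ^ N - q ^ (N % d)) / (q ^ d - 1) - q ^ (N % d) + 1) * (q ^ d - 1) := by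
  rw [Nat.pow_sub_pow_mod_div_eq hq hd]
  have hx : 2 ≤ q ^ d := hq.trans (Nat.le_self_pow hd.ne' q)
  have hdiv := Nat.mod_add_div N d
  have ha : 2 ≤ N / d := (Nat.le_div_iff_mul_le hd).2 (by linarith)
  set a := N / d
  set Q := q ^ (N % d)
  set G := ∑ i ∈ Finset.range a, (q ^ d) ^ i
  have hgeom : G * (q ^ d - 1) + 1 = (q ^ d) ^ a := by
    simpa only [Nat.sub_add_cancel (by omega : 1 ≤ q ^ d)] using geom_sum_mul_add (q ^ d - 1) a
  have hsplit : Q * (q ^ d) ^ a = q * q ^ (N - 1) := by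
    rw [← pow_mul, ← pow_add, hdiv, ← pow_succ']
    congr 1
    omega
  have hsmall : Q * q ^ d ≤ q ^ (N - 1) := by
    rw [← pow_add]
    have := Nat.mul_le_mul_left d ha
    exact Nat.pow_le_pow_right (by omega) (by omega)
  have hG : 1 ≤ G := Finset.single_le_sum (f := fun i => (q ^ d) ^ i) (fun _ _ => Nat.zero_le _)
    (Finset.mem_range.2 (by omega : 0 < a))
  have hQ : Q ≤ Q * G := Nat.le_mul_of_pos_right _ hG
  have hP : 2 * q ^ (N - 1) ≤ q * q ^ (N - 1) := Nat.mul_le_mul_right _ hq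
  have hQgeom := congrArg (Q * ·) hgeom
  zify [hQ, Nat.one_le_pow (N - 1) q (by omega), (by omega : 1 ≤ q ^ d)]
    at hsplit hQgeom hsmall hP ⊢
  linarith

namespace Submodule

variable {K V : Type*} [Field K] [AddCommGroup V] [Module K V]
  {S : Set (Submodule K V)} {Z : Submodule K V}

theorem center_le_of_mem_sunflower (hS : 1 < S.ncard) (hZ : ∀ U ∈ S, ∀ W ∈ S, U ≠ W → U ⊓ W = Z)
    {U : Submodule K V} (hU : U ∈ S) : Z ≤ U := by
  obtain ⟨W, hW, hWU⟩ := Set.exists_ne_of_one_lt_ncard hS U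
  exact hZ W hW U hU hWU ▸ inf_le_right

theorem finrank_add_finrank_le_finrank_sSup_add [FiniteDimensional K V]
    (hZ : ∀ U ∈ S, ∀ W ∈ S, U ≠ W → U ⊓ W = Z) {U W : Submodule K V} (hU : U ∈ S) (hW : W ∈ S)
    (hUW : U ≠ W) :
    finrank K U + finrank K W ≤ finrank K (sSup S : Submodule K V) + finrank K Z := by
  rw [← finrank_sup_add_finrank_inf_eq, hZ U hU W hW hUW]
  gcongr
  exact Submodule.finrank_mono (sup_le (le_sSup hU) (le_sSup hW))

variable [Finite V]

theorem ncard_eq_pow_finrank (P : Submodule K V) :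
    (P : Set V).ncard = Nat.card K ^ finrank K P := by
  rw [← Module.natCard_eq_pow_finrank, ← Nat.card_coe_set_eq]
  rfl

theorem ncard_mul_sub_le_of_sunflower {k : ℕ} (hS : 1 < S.ncard)
    (hZ : ∀ U ∈ S, ∀ W ∈ S, U ≠ W → U ⊓ W = Z) (hdim : ∀ U ∈ S, finrank K U = k) :
    S.ncard * (Nat.card K ^ k - Nat.card K ^ finrank K Z) ≤
      Nat.card K ^ finrank K (sSup S : Submodule K V) - Nat.card K ^ finrank K Z := by
  have hZS : Z ≤ sSup S := by
    obtain ⟨U, hU⟩ := Set.nonempty_of_ncard_ne_zero (by omega : S.ncard ≠ 0)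
    exact (center_le_of_mem_sunflower hS hZ hU).trans (le_sSup hU)
  have hpetal : ∀ U ∈ S, ((U : Set V) \ Z).ncard = Nat.card K ^ k - Nat.card K ^ finrank K Z :=
    fun U hU => by
      rw [Set.ncard_sdiff (SetLike.coe_subset_coe.2 (center_le_of_mem_sunflower hS hZ hU)),
        ncard_eq_pow_finrank, ncard_eq_pow_finrank, hdim U hU]
  have hdisj : S.PairwiseDisjoint fun U => (U : Set V) \ Z := by
    intro U hU W hW hUW
    refine Set.disjoint_left.2 fun x hxU hxW => hxU.2 ?_
    rw [← hZ U hU W hW hUW]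
    exact ⟨hxU.1, hxW.1⟩
  have hSfin : S.Finite := Set.finite_of_ncard_pos (by omega)
  calc S.ncard * (Nat.card K ^ k - Nat.card K ^ finrank K Z)
      = ∑ᶠ U ∈ S, ((U : Set V) \ Z).ncard := by
        rw [finsum_mem_congr rfl hpetal, finsum_mem_eq_finite_toFinset_sum _ hSfin,
          Finset.sum_const, smul_eq_mul, Set.ncard_eq_toFinset_card _ hSfin]
    _ = (⋃ U ∈ S, (U : Set V) \ Z).ncard :=
        (hSfin.ncard_biUnion (fun _ _ => Set.toFinite _) hdisj).symm
    _ ≤ (((sSup S : Submodule K V) : Set V) \ Z).ncard :=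
        Set.ncard_le_ncard (Set.iUnion₂_subset fun U hU =>
          Set.sdiff_subset_sdiff_left (SetLike.coe_subset_coe.2 (le_sSup hU)))
    _ = _ := by
        rw [Set.ncard_sdiff (SetLike.coe_subset_coe.2 hZS), ncard_eq_pow_finrank,
          ncard_eq_pow_finrank]

end Submodule

theorem large_sunflower_spans_general
    (q : ℕ) (F : Type) [Field F] [Fintype F]
    (hF : Fintype.card F = q) (k n c r : ℕ) (hk : 1 ≤ k) (hc : c ≤ k - 1)
    (S : Set (Submodule F (Fin n → F))) (Z : Submodule F (Fin n → F))
    (hcard2 : 2 ≤ S.ncard) (hdim : ∀ U ∈ S, Module.finrank F U = k)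
    (hZ : ∀ U ∈ S, ∀ V ∈ S, U ≠ V → U ⊓ V = Z) (hZdim : Module.finrank F Z = c)
    (hr : r = (n - c) % (k - c))
    (hcard : (q ^ (n - c) - q ^ r) / (q ^ (k - c) - 1) - q ^ r + 1 ≤ S.ncard) :
    sSup S = ⊤ := by
  by_contra hspan
  have hq : 2 ≤ q := hF ▸ Fintype.one_lt_card
  have hS : 1 < S.ncard := hcard2
  have hm : finrank F (sSup S : Submodule F (Fin n → F)) < n := by
    simpa using Submodule.finrank_lt hspan
  obtain ⟨U, hU, W, hW, hUW⟩ := (Set.one_lt_ncard S.toFinite).1 hS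
  have hrank := Submodule.finrank_add_finrank_le_finrank_sSup_add hZ hU hW hUW
  rw [hdim U hU, hdim W hW, hZdim] at hrank
  have hcount := Submodule.ncard_mul_sub_le_of_sunflower hS hZ hdim
  rw [Nat.card_eq_fintype_card, hF, hZdim] at hcount
  have hreduced : S.ncard * (q ^ (k - c) - 1) ≤ q ^ (n - c - 1) - 1 := by
    refine Nat.le_of_mul_le_mul_left ?_ (pow_pos (by omega : 0 < q) c)
    calc q ^ c * (S.ncard * (q ^ (k - c) - 1))
        = S.ncard * (q ^ k - q ^ c) := by rw [Nat.pow_sub_pow_eq_mul q (by omega)]; ring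
      _ ≤ q ^ (n - 1) - q ^ c :=
        hcount.trans (Nat.sub_le_sub_right (Nat.pow_le_pow_right (by omega) (by omega)) _)
      _ = q ^ c * (q ^ (n - c - 1) - 1) := by
        rw [Nat.pow_sub_pow_eq_mul q (by omega), Nat.sub_right_comm]
  subst hr
  have hbound := Nat.pow_pred_sub_one_lt_mul hq (d := k - c) (N := n - c) (by omega) (by omega)
  have := Nat.mul_le_mul_right (q ^ (k - c) - 1) hcard
  omega

/-- A sunflower in `G_q(k,n)` with center of dimension `c` whose cardinality is at
least `(q^{n-c} - q^r)/(q^{k-c} - 1) - q^r + 1`, where `r = (n-c) mod (k-c)`,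
spans `F_q^n`. -/
theorem large_sunflower_spans
    (q : ℕ) (hq : IsPrimePow q) (F : Type) [Field F] [Fintype F]
    (hF : Fintype.card F = q) (k n c r : ℕ) (hk : 1 ≤ k) (hkn : k < n) (hc : c ≤ k - 1)
    (S : Set (Submodule F (Fin n → F))) (Z : Submodule F (Fin n → F))
    (hcard2 : 2 ≤ S.ncard) (hdim : ∀ U ∈ S, Module.finrank F U = k)
    (hZ : ∀ U ∈ S, ∀ V ∈ S, U ≠ V → U ⊓ V = Z) (hZdim : Module.finrank F Z = c)
    (hr : r = (n - c) % (k - c))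
    (hcard : (q ^ (n - c) - q ^ r) / (q ^ (k - c) - 1) - q ^ r + 1 ≤ S.ncard) :
    sSup S = ⊤ :=
  large_sunflower_spans_general q F hF k n c r hk hc S Z hcard2 hdim hZ hZdim hr hcard
end

section
/- Let q be a prime power, 1 ≤ k < n, 1 ≤ c ≤ k−1, and let C ⊆ G_q(k,n) be a finite equidistant c-intersecting code that is not a sunflower. Then for every center A ∈ T(C) = {U ∩ V : U, V ∈ C, U ≠ V}, the petal P(A) = {U ∈ C : A ⊆ U} satisfies |P(A)| ≤ (q^k − q^{c−1})/(q^c − q^{c−1}). -/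
open Submodule Module Set

lemma ncard_coe_submodule {F : Type} [Field F] [Fintype F] {n : ℕ}
    (S : Submodule F (Fin n → F)) :
    (S : Set (Fin n → F)).ncard = Fintype.card F ^ Module.finrank F ↥S := by
  classical
  haveI : Fintype ↥S := Fintype.ofFinite ↥S
  rw [← Nat.card_coe_set_eq, Nat.card_eq_fintype_card]
  exact card_eq_pow_finrank (K := F) (V := ↥S)

/-- In a finite equidistant `c`-intersecting code which is not a sunflower
(`1 ≤ c ≤ k-1`), every petal `P(A) = {U ∈ C : A ⊆ U}` attached to a center
`A ∈ T(C)` has at most `(q^k - q^{c-1})/(q^c - q^{c-1})` elements. -/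
theorem petal_card_bound
    (q : ℕ) (hq : IsPrimePow q) (F : Type) [Field F] [Fintype F]
    (hF : Fintype.card F = q) (k n c : ℕ) (hk : 1 ≤ k) (hkn : k < n)
    (hc1 : 1 ≤ c) (hc2 : c ≤ k - 1)
    (C : Set (Submodule F (Fin n → F))) (hfin : C.Finite)
    (hC : IsEquidistantCode F n k c C) (hns : ¬ IsSunflower C) :
    ∀ A ∈ {W : Submodule F (Fin n → F) | ∃ U ∈ C, ∃ V ∈ C, U ≠ V ∧ W = U ⊓ V},
      (({U ∈ C | A ≤ U}).ncard : ℚ) ≤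
        ((q : ℚ) ^ k - (q : ℚ) ^ (c - 1)) / ((q : ℚ) ^ c - (q : ℚ) ^ (c - 1)) := by
  classical
  obtain ⟨hC2, hdim, hint⟩ := hC
  rintro A ⟨U₀, hU₀, V₀, hV₀, hne₀, hAeq⟩
  have hq2 : 2 ≤ q := hq.two_le
  have hck : c ≤ k := hc2.trans (Nat.sub_le k 1)
  have hAc : Module.finrank F ↥A = c := by rw [hAeq]; exact hint U₀ hU₀ V₀ hV₀ hne₀
  -- find W ∈ C not containing A
  obtain ⟨W, hWC, hAW⟩ : ∃ W ∈ C, ¬ A ≤ W := by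
    by_contra h
    push_neg at h
    refine hns ⟨A, fun U hU V hV hUV => ?_⟩
    exact (Submodule.eq_of_le_of_finrank_le (le_inf (h U hU) (h V hV))
      (by rw [hint U hU V hV hUV, hAc])).symm
  set d := Module.finrank F ↥(A ⊓ W) with hd
  have hdltc : d < c := by
    have hlt : A ⊓ W < A :=
      inf_le_left.lt_of_ne (fun h => hAW (inf_eq_left.mp h))
    calc d < Module.finrank F ↥A := Submodule.finrank_lt_finrank_of_lt hlt
    _ = c := hAc
  -- the petal
  set P : Set (Submodule F (Fin n → F)) := {U ∈ C | A ≤ U} with hP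
  have hPfin : P.Finite := hfin.subset (fun U hU => hU.1)
  set PF : Finset (Submodule F (Fin n → F)) := hPfin.toFinset with hPF
  -- inner intersection equals A
  have hinterA : ∀ U ∈ PF, ∀ V ∈ PF, U ≠ V → U ⊓ V = A := by
    intro U hU V hV hUV
    rw [hPF, Set.Finite.mem_toFinset] at hU hV
    exact (Submodule.eq_of_le_of_finrank_le (le_inf hU.2 hV.2)
      (by rw [hint U hU.1 V hV.1 hUV, hAc])).symm
  set f : Submodule F (Fin n → F) → Finset (Fin n → F) := fun U =>
    (((U ⊓ W : Submodule F (Fin n → F)) : Set (Fin n → F)) \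
      ((A ⊓ W : Submodule F (Fin n → F)) : Set (Fin n → F))).toFinite.toFinset with hf
  have hfcard : ∀ U ∈ PF, (f U).card = q ^ c - q ^ d := by
    intro U hU
    rw [hPF, Set.Finite.mem_toFinset] at hU
    have hUW : U ≠ W := fun h => hAW (h ▸ hU.2)
    have hsub : ((A ⊓ W : Submodule F (Fin n → F)) : Set (Fin n → F)) ⊆
        ((U ⊓ W : Submodule F (Fin n → F)) : Set (Fin n → F)) :=
      SetLike.coe_subset_coe.mpr (inf_le_inf_right W hU.2)
    rw [hf]
    rw [← Set.ncard_eq_toFinset_card _ (Set.toFinite _),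
      Set.ncard_diff hsub (Set.toFinite _), ncard_coe_submodule, ncard_coe_submodule,
      hF, ← hd, hint U hU.1 W hWC hUW]
  -- disjointness
  have hdisj : ∀ U ∈ PF, ∀ V ∈ PF, U ≠ V → Disjoint (f U) (f V) := by
    intro U hU V hV hUV
    rw [Finset.disjoint_left]
    intro x hxU hxV
    rw [hf, Set.Finite.mem_toFinset, Set.mem_diff] at hxU hxV
    apply hxU.2
    have hA : x ∈ U ⊓ V := ⟨hxU.1.1, hxV.1.1⟩
    rw [hinterA U hU V hV hUV] at hA
    exact ⟨hA, hxU.1.2⟩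
  -- union is inside W \ (A ⊓ W)
  have hsub2 : PF.biUnion f ⊆
      ((W : Set (Fin n → F)) \ ((A ⊓ W : Submodule F (Fin n → F)) : Set (Fin n → F))).toFinite.toFinset := by
    intro x hx
    rw [Finset.mem_biUnion] at hx
    obtain ⟨U, _, hxU⟩ := hx
    rw [hf, Set.Finite.mem_toFinset, Set.mem_diff] at hxU
    rw [Set.Finite.mem_toFinset, Set.mem_diff]
    exact ⟨hxU.1.2, hxU.2⟩
  -- the key counting inequality
  have hkey : PF.card * (q ^ c - q ^ d) ≤ q ^ k - q ^ d := by
    have h1 : ∑ U ∈ PF, (f U).card = (PF.biUnion f).card :=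
      (Finset.card_biUnion hdisj).symm
    have h2 : ∑ U ∈ PF, (f U).card = PF.card * (q ^ c - q ^ d) := by
      rw [Finset.sum_congr rfl hfcard, Finset.sum_const, smul_eq_mul]
    have h3 : (((W : Set (Fin n → F)) \
        ((A ⊓ W : Submodule F (Fin n → F)) : Set (Fin n → F))).toFinite.toFinset).card
        = q ^ k - q ^ d := by
      have hsub : ((A ⊓ W : Submodule F (Fin n → F)) : Set (Fin n → F)) ⊆
          (W : Set (Fin n → F)) := SetLike.coe_subset_coe.mpr inf_le_right
      rw [← Set.ncard_eq_toFinset_card _ (Set.toFinite _),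
        Set.ncard_diff hsub (Set.toFinite _), ncard_coe_submodule, ncard_coe_submodule,
        hF, ← hd, hdim W hWC]
    calc PF.card * (q ^ c - q ^ d) = (PF.biUnion f).card := by rw [← h2, h1]
    _ ≤ _ := Finset.card_le_card hsub2
    _ = q ^ k - q ^ d := h3
  -- pass to ℚ
  have hqQ : (2 : ℚ) ≤ (q : ℚ) := by exact_mod_cast hq2
  have hdc1 : d ≤ c - 1 := Nat.le_sub_one_of_lt hdltc
  have h1q : (1 : ℚ) ≤ (q : ℚ) := one_le_two.trans hqQ
  have h1q' : (1 : ℚ) < (q : ℚ) := lt_of_lt_of_le one_lt_two hqQ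
  have hQdc : (q : ℚ) ^ d ≤ (q : ℚ) ^ (c - 1) :=
    pow_le_pow_right₀ h1q hdc1
  have hQc1c : (q : ℚ) ^ (c - 1) < (q : ℚ) ^ c :=
    pow_lt_pow_right₀ h1q' (by omega)
  have hQck : (q : ℚ) ^ c ≤ (q : ℚ) ^ k := pow_le_pow_right₀ h1q hck
  have hdenQ : (0 : ℚ) < (q : ℚ) ^ c - (q : ℚ) ^ d :=
    sub_pos.2 (pow_lt_pow_right₀ h1q' hdltc)
  have hden1 : (0 : ℚ) < (q : ℚ) ^ c - (q : ℚ) ^ (c - 1) := sub_pos.2 hQc1c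
  have hcast : (PF.card : ℚ) * ((q : ℚ) ^ c - (q : ℚ) ^ d) ≤ (q : ℚ) ^ k - (q : ℚ) ^ d := by
    have hdc : q ^ d ≤ q ^ c := Nat.pow_le_pow_right (by omega) hdltc.le
    have hdk : q ^ d ≤ q ^ k := Nat.pow_le_pow_right (by omega) (hdltc.le.trans hck)
    have := hkey
    have h' : ((PF.card * (q ^ c - q ^ d) : ℕ) : ℚ) ≤ ((q ^ k - q ^ d : ℕ) : ℚ) := by
      exact_mod_cast this
    rwa [Nat.cast_mul, Nat.cast_sub hdc, Nat.cast_sub hdk, Nat.cast_pow, Nat.cast_pow,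
      Nat.cast_pow] at h'
  have hPcard : P.ncard = PF.card := Set.ncard_eq_toFinset_card P hPfin
  rw [hPcard]
  calc (PF.card : ℚ) ≤ ((q : ℚ) ^ k - (q : ℚ) ^ d) / ((q : ℚ) ^ c - (q : ℚ) ^ d) := by
        rw [le_div_iff₀ hdenQ]; exact hcast
  _ ≤ ((q : ℚ) ^ k - (q : ℚ) ^ (c - 1)) / ((q : ℚ) ^ c - (q : ℚ) ^ (c - 1)) := by
        rw [div_le_div_iff₀ hdenQ hden1]
        clear hAW
        nlinarith [mul_nonneg (sub_nonneg.2 hQck) (sub_nonneg.2 hQdc)]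
end

section
/- Let q be a prime power, 1 ≤ k < n, 0 ≤ c ≤ k−1, and let C ⊆ G_q(k,n) be a finite equidistant c-intersecting code. Then at least one of the following holds: (1) C is a sunflower, or (2) the number of centers satisfies t(C) ≥ |C| · (q^c − q^{c−1})/(q^k − q^{c−1}). -/
open Submodule Module Set

section Aux

variable {F : Type} [Field F] [Fintype F] {n : ℕ}

lemma ncard_submodule (P : Submodule F (Fin n → F)) :
    (P : Set (Fin n → F)).ncard = Fintype.card F ^ Module.finrank F P := by
  haveI : Fintype ↥P := Fintype.ofFinite ↥P
  rw [← Nat.card_coe_set_eq, Nat.card_eq_fintype_card]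
  exact card_eq_pow_finrank

/-- The core counting bound: if the members of `S` pairwise intersect (inside `W`) in
`Z ⊓ W`, all contain `Z ⊓ W` when intersected with `W`, then counting vectors gives
`|S| * (q^c - q^d) ≤ q^k - q^d`. -/
lemma key_count (S : Finset (Submodule F (Fin n → F))) (W Z : Submodule F (Fin n → F))
    {k c d : ℕ} (hW : Module.finrank F W = k)
    (hUW : ∀ U ∈ S, Module.finrank F ↥(U ⊓ W) = c)
    (hZW : Module.finrank F ↥(Z ⊓ W) = d)
    (hZle : ∀ U ∈ S, Z ≤ U)
    (hpair : ∀ U ∈ S, ∀ V ∈ S, U ≠ V → U ⊓ V = Z) :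
    S.card * (Fintype.card F ^ c - Fintype.card F ^ d)
      ≤ Fintype.card F ^ k - Fintype.card F ^ d := by
  classical
  set q := Fintype.card F
  set fs : Submodule F (Fin n → F) → Finset (Fin n → F) :=
    fun P => (Set.toFinite (P : Set (Fin n → F))).toFinset with hfs
  have hmem : ∀ (P : Submodule F (Fin n → F)) (x), x ∈ fs P ↔ x ∈ P := by
    intro P x; rw [hfs, Set.Finite.mem_toFinset]; exact Iff.rfl
  have hcard : ∀ P : Submodule F (Fin n → F), (fs P).card = q ^ Module.finrank F P := by
    intro P
    rw [hfs, ← Set.ncard_eq_toFinset_card _ (Set.toFinite _), ncard_submodule]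
  set A : Submodule F (Fin n → F) → Finset (Fin n → F) :=
    fun U => fs (U ⊓ W) \ fs (Z ⊓ W) with hA
  have hAsub : ∀ U ∈ S, A U ⊆ fs W \ fs (Z ⊓ W) := by
    intro U hU x hx
    rw [hA, Finset.mem_sdiff] at hx
    rw [Finset.mem_sdiff]
    refine ⟨?_, hx.2⟩
    rw [hmem, Submodule.mem_inf] at hx
    rw [hmem]
    exact hx.1.2
  have hdisj : ∀ U ∈ S, ∀ V ∈ S, U ≠ V → Disjoint (A U) (A V) := by
    intro U hU V hV hUV
    rw [Finset.disjoint_left]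
    intro x hxU hxV
    rw [hA, Finset.mem_sdiff, hmem, hmem] at hxU hxV
    exact hxU.2 (by
      rw [Submodule.mem_inf] at hxU hxV ⊢
      have : x ∈ U ⊓ V := Submodule.mem_inf.2 ⟨hxU.1.1, hxV.1.1⟩
      rw [hpair U hU V hV hUV] at this
      exact ⟨this, hxU.1.2⟩)
  have hcardA : ∀ U ∈ S, (A U).card = q ^ c - q ^ d := by
    intro U hU
    rw [hA, Finset.card_sdiff_of_subset (by
      intro x hx
      rw [hmem, Submodule.mem_inf] at hx ⊢
      exact ⟨hZle U hU hx.1, hx.2⟩)]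
    rw [hcard, hcard, hUW U hU, hZW]
  calc S.card * (q ^ c - q ^ d) = ∑ U ∈ S, (A U).card := by
        rw [Finset.sum_congr rfl hcardA, Finset.sum_const, smul_eq_mul]
    _ = (S.biUnion A).card := (Finset.card_biUnion hdisj).symm
    _ ≤ (fs W \ fs (Z ⊓ W)).card := Finset.card_le_card (by
        intro x hx
        rw [Finset.mem_biUnion] at hx
        obtain ⟨U, hU, hxU⟩ := hx
        exact hAsub U hU hxU)
    _ ≤ q ^ k - q ^ d := by
        rw [Finset.card_sdiff_of_subset (by
          intro x hx
          rw [hmem, Submodule.mem_inf] at hx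
          rw [hmem]
          exact hx.2), hcard, hcard, hW, hZW]

end Aux

/-- A finite equidistant `c`-intersecting code is either a sunflower, or its number
of centers satisfies `t(C) ≥ |C| (q^c - q^{c-1})/(q^k - q^{c-1})`. -/
theorem sunflower_or_many_centers
    (q : ℕ) (hq : IsPrimePow q) (F : Type) [Field F] [Fintype F]
    (hF : Fintype.card F = q) (k n c : ℕ) (hk : 1 ≤ k) (hkn : k < n) (hc : c ≤ k - 1)
    (C : Set (Submodule F (Fin n → F))) (hfin : C.Finite)
    (hC : IsEquidistantCode F n k c C) :
    IsSunflower C ∨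
      (C.ncard : ℚ) * ((q : ℚ) ^ (c : ℤ) - (q : ℚ) ^ ((c : ℤ) - 1)) /
          ((q : ℚ) ^ (k : ℤ) - (q : ℚ) ^ ((c : ℤ) - 1)) ≤
        (({W : Submodule F (Fin n → F) | ∃ U ∈ C, ∃ V ∈ C, U ≠ V ∧ W = U ⊓ V}).ncard : ℚ) := by
  classical
  obtain ⟨hC2, hdim, hint⟩ := hC
  have hq2 : 2 ≤ q := by rw [← hF]; exact Fintype.one_lt_card
  rcases Nat.eq_zero_or_pos c with hc0 | hc1
  · left
    refine ⟨⊥, fun U hU V hV hUV => ?_⟩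
    have h := hint U hU V hV hUV
    rw [hc0] at h
    exact Submodule.finrank_eq_zero.mp h
  by_cases hsun : IsSunflower C
  · exact Or.inl hsun
  right
  have hck : c < k := by omega
  set Cf := hfin.toFinset with hCf
  have hTfin : {W : Submodule F (Fin n → F) | ∃ U ∈ C, ∃ V ∈ C, U ≠ V ∧ W = U ⊓ V}.Finite := by
    refine ((hfin.prod hfin).image (fun p => p.1 ⊓ p.2)).subset ?_
    rintro W ⟨U, hU, V, hV, hUV, rfl⟩
    exact ⟨(U, V), ⟨hU, hV⟩, rfl⟩
  set Tf := hTfin.toFinset with hTf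
  have hrankT : ∀ Z ∈ Tf, Module.finrank F Z = c := by
    intro Z hZ
    rw [hTf, Set.Finite.mem_toFinset] at hZ
    obtain ⟨U, hU, V, hV, hUV, rfl⟩ := hZ
    exact hint U hU V hV hUV
  have hmiss : ∀ Z ∈ Tf, ∃ W ∈ C, ¬ Z ≤ W := by
    intro Z hZ
    by_contra h
    push_neg at h
    refine hsun ⟨Z, fun U hU V hV hUV => ?_⟩
    have hle : Z ≤ U ⊓ V := le_inf (h U hU) (h V hV)
    exact (Submodule.eq_of_le_of_finrank_eq hle
      (by rw [hrankT Z hZ, hint U hU V hV hUV])).symm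
  set M : ℚ := ((q:ℚ)^k - (q:ℚ)^(c-1)) / ((q:ℚ)^c - (q:ℚ)^(c-1)) with hM
  have hqQ : (2:ℚ) ≤ (q:ℚ) := by exact_mod_cast hq2
  have hpow_lt : ∀ {a b : ℕ}, a < b → (q:ℚ)^a < (q:ℚ)^b := fun h =>
    pow_lt_pow_right₀ (by linarith) h
  have hden : (0:ℚ) < (q:ℚ)^c - (q:ℚ)^(c-1) := by
    have := hpow_lt (show c-1 < c by omega); linarith
  have hnum : (0:ℚ) < (q:ℚ)^k - (q:ℚ)^(c-1) := by
    have := hpow_lt (show c-1 < k by omega); linarith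
  have hbound : ∀ Z ∈ Tf, ((Cf.filter (fun U => Z ≤ U)).card : ℚ) ≤ M := by
    intro Z hZ
    obtain ⟨W, hWC, hZW⟩ := hmiss Z hZ
    set d := Module.finrank F ↥(Z ⊓ W) with hd
    set S := Cf.filter (fun U => Z ≤ U) with hS
    have hmemS : ∀ U ∈ S, U ∈ C ∧ Z ≤ U := by
      intro U hU
      rw [hS, Finset.mem_filter, hCf, Set.Finite.mem_toFinset] at hU
      exact hU
    have hdc : d < c := by
      rw [hd, ← hrankT Z hZ]
      exact Submodule.finrank_lt_finrank_of_lt (lt_of_le_of_ne inf_le_left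
        (fun h => hZW (inf_eq_left.mp h)))
    have hkey := key_count S W Z (hdim W hWC)
      (fun U hU => hint U (hmemS U hU).1 W hWC
        (fun e => hZW (e ▸ (hmemS U hU).2))) rfl
      (fun U hU => (hmemS U hU).2)
      (fun U hU V hV hUV => (Submodule.eq_of_le_of_finrank_eq
        (le_inf (hmemS U hU).2 (hmemS V hV).2)
        (by rw [hrankT Z hZ, hint U (hmemS U hU).1 V (hmemS V hV).1 hUV])).symm)
    clear hZW
    rw [hF] at hkey
    have hdc' : q^d ≤ q^c := Nat.pow_le_pow_right (by omega) hdc.le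
    have hdk' : q^d ≤ q^k := Nat.pow_le_pow_right (by omega) (by omega)
    have h1 : (S.card : ℚ) * ((q:ℚ)^c - (q:ℚ)^d) ≤ (q:ℚ)^k - (q:ℚ)^d := by
      have := (Nat.cast_le (α := ℚ)).mpr hkey
      rw [Nat.cast_mul, Nat.cast_sub hdc', Nat.cast_sub hdk'] at this
      push_cast at this ⊢
      exact this
    have hde : (q:ℚ)^d ≤ (q:ℚ)^(c-1) := by
      rcases eq_or_lt_of_le (show d ≤ c-1 by omega) with h | h
      · rw [h]
      · exact (hpow_lt h).le
    have hdcQ : (q:ℚ)^d < (q:ℚ)^c := hpow_lt hdc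
    have hckQ : (q:ℚ)^c < (q:ℚ)^k := hpow_lt hck
    rw [hM, le_div_iff₀ hden]
    rcases Nat.eq_zero_or_pos S.card with h0 | h1' 
    · rw [h0]; push_cast; nlinarith
    · have hm1 : (1:ℚ) ≤ (S.card : ℚ) := by exact_mod_cast h1'
      nlinarith [mul_le_mul_of_nonneg_left hde (by linarith : (0:ℚ) ≤ (S.card:ℚ) - 1)]
  have hcover : Cf ⊆ Tf.biUnion (fun Z => Cf.filter fun U => Z ≤ U) := by
    intro U hU
    have hUC : U ∈ C := by rwa [hCf, Set.Finite.mem_toFinset] at hU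
    obtain ⟨V, hV, hVU⟩ := Set.exists_ne_of_one_lt_ncard (s := C) (by omega) U
    refine Finset.mem_biUnion.2 ⟨U ⊓ V, ?_, ?_⟩
    · rw [hTf, Set.Finite.mem_toFinset]
      exact ⟨U, hUC, V, hV, fun e => hVU e.symm, rfl⟩
    · rw [Finset.mem_filter]; exact ⟨hU, inf_le_left⟩
  have hsum : (Cf.card : ℚ) ≤ (Tf.card : ℚ) * M := by
    have h1 : Cf.card ≤ ∑ Z ∈ Tf, (Cf.filter fun U => Z ≤ U).card :=
      le_trans (Finset.card_le_card hcover) Finset.card_biUnion_le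
    calc (Cf.card:ℚ) ≤ ∑ Z ∈ Tf, ((Cf.filter fun U => Z ≤ U).card : ℚ) := by
          exact_mod_cast h1
      _ ≤ ∑ _Z ∈ Tf, M := Finset.sum_le_sum hbound
      _ = Tf.card * M := by rw [Finset.sum_const, nsmul_eq_mul]
  have e1 : (q:ℚ)^(c:ℤ) = (q:ℚ)^c := zpow_natCast _ c
  have e2 : (q:ℚ)^(k:ℤ) = (q:ℚ)^k := zpow_natCast _ k
  have e3 : (q:ℚ)^((c:ℤ)-1) = (q:ℚ)^(c-1 : ℕ) := by
    rw [← zpow_natCast]; congr 1; omega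
  rw [Set.ncard_eq_toFinset_card _ hfin, Set.ncard_eq_toFinset_card _ hTfin, e1, e2, e3,
    div_le_iff₀ hnum]
  have hMc : M * ((q:ℚ)^c - (q:ℚ)^(c-1)) = (q:ℚ)^k - (q:ℚ)^(c-1) :=
    div_mul_cancel₀ _ hden.ne'
  calc (Cf.card:ℚ) * ((q:ℚ)^c - (q:ℚ)^(c-1))
      ≤ ((Tf.card:ℚ) * M) * ((q:ℚ)^c - (q:ℚ)^(c-1)) :=
        mul_le_mul_of_nonneg_right hsum hden.le
    _ = (Tf.card:ℚ) * ((q:ℚ)^k - (q:ℚ)^(c-1)) := by rw [mul_assoc, hMc]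
end

section
/- Let q be a prime power, 1 ≤ k < n integers, and let c be an integer with max{0, 2k−n} ≤ c ≤ k−1. Write n − c = h(k−c) + r with 0 ≤ r ≤ k−c−1 and h ≥ 2. Then there exists a sunflower C ⊆ G_q(k,n) with center of dimension c and cardinality |C| = (q^{n−c} − q^r)/(q^{k−c} − 1) − q^r + 1. -/
open Submodule Module Set

/-!
Let `m = k - c`. A partial spread of `m`-subspaces of `F^(n-c)` pulls back along a surjection
`F^n → F^(n-c)` with `c`-dimensional kernel `Z` to a sunflower of `k`-subspaces with center `Z`.
Partial spreads of size `1 + ∑_{i=1}^{h-1} q^(i m + r)` in dimension `h m + r` come by induction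
on `h`. For the step, write a space of dimension `m + d`, `d = h m + r`, as `F^m × E` with
`E = 𝔽_{q^d}` and embed `F^m` into `E` by some `ι`. The graphs of `x ↦ a ι(x)`, `a ∈ E`, meet
pairwise trivially (`a - b` is invertible) and meet every `0 × U` trivially, so together with
`0 × P` for a partial spread `P` of `E` they form a partial spread with `q^d` more members.
The geometric series turns the size into the stated closed form.
-/

open Function

def IsPartialSpread (F : Type*) {V : Type*} [Field F] [AddCommGroup V] [Module F V] (m : ℕ)
    (P : Set (Submodule F V)) : Prop :=
  (∀ U ∈ P, finrank F U = m) ∧ P.Pairwise Disjoint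

section Graph

variable {R M N : Type*} [Ring R] [AddCommGroup M] [AddCommGroup N] [Module R M] [Module R N]

theorem LinearMap.finrank_graph [StrongRankCondition R] (f : M →ₗ[R] N) :
    finrank R f.graph = finrank R M := by
  rw [graph_eq_range_prod, finrank_range_of_inj]
  exact fun x y hxy => congrArg Prod.fst hxy

theorem LinearMap.disjoint_graph_of_injective_sub {f g : M →ₗ[R] N} (hfg : Injective (f - g)) :
    Disjoint f.graph g.graph := by
  rw [disjoint_def]
  rintro ⟨x, y⟩ hf hg
  rw [mem_graph_iff] at hf hg
  obtain rfl : x = 0 := hfg (by simp [← hf, ← hg])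
  simpa using hf

theorem LinearMap.disjoint_graph_map_inr (f : M →ₗ[R] N) (U : Submodule R N) :
    Disjoint f.graph (U.map (LinearMap.inr R M N)) := by
  rw [disjoint_def]
  rintro _ hz ⟨u, -, rfl⟩
  simpa [mem_graph_iff] using hz

end Graph

theorem Submodule.finrank_comap_of_surjective {K V W : Type*} [Field K] [AddCommGroup V]
    [Module K V] [FiniteDimensional K V] [AddCommGroup W] [Module K W] {f : V →ₗ[K] W}
    (hf : Surjective f) (U : Submodule K W) :
    finrank K (U.comap f) = finrank K U + finrank K (LinearMap.ker f) := by
  set g := f ∘ₗ (U.comap f).subtype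
  have hrange : LinearMap.range g = U := by
    rw [LinearMap.range_comp, range_subtype, map_comap_eq_of_surjective hf]
  have hker : LinearMap.ker g = (LinearMap.ker f).comap (U.comap f).subtype :=
    LinearMap.ker_comp _ _
  rw [← g.finrank_range_add_finrank_ker, hrange, hker,
    (comapSubtypeEquivOfLe (LinearMap.ker_le_comap f)).finrank_eq]

namespace IsPartialSpread

variable {F V W : Type*} [Field F] [AddCommGroup V] [Module F V] [AddCommGroup W] [Module F W]
  {m : ℕ} {P Q : Set (Submodule F V)}

theorem ne_bot (hP : IsPartialSpread F m P) (hm : 0 < m) {U : Submodule F V} (hU : U ∈ P) :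
    U ≠ ⊥ := by
  rintro rfl
  have hdim := hP.1 ⊥ hU
  rw [finrank_bot] at hdim
  omega

theorem map (hP : IsPartialSpread F m P) {f : V →ₗ[F] W} (hf : Injective f) :
    IsPartialSpread F m (Submodule.map f '' P) := by
  refine ⟨?_, ?_⟩
  · rintro _ ⟨U, hU, rfl⟩
    rw [← (equivMapOfInjective f hf U).finrank_eq, hP.1 U hU]
  · rintro _ ⟨U, hU, rfl⟩ _ ⟨U', hU', rfl⟩ hne
    exact disjoint_map hf (hP.2 hU hU' (ne_of_apply_ne _ hne))

theorem union (hP : IsPartialSpread F m P) (hQ : IsPartialSpread F m Q)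
    (hPQ : ∀ U ∈ P, ∀ U' ∈ Q, Disjoint U U') : IsPartialSpread F m (P ∪ Q) := by
  refine ⟨?_, pairwise_union_of_symm.2 ⟨hP.2, hQ.2, fun U hU U' hU' _ => hPQ U hU U' hU'⟩⟩
  rintro U (hU | hU)
  exacts [hP.1 U hU, hQ.1 U hU]

theorem ncard_union [Finite V] (hP : IsPartialSpread F m P) (hm : 0 < m)
    (hPQ : ∀ U ∈ P, ∀ U' ∈ Q, Disjoint U U') : (P ∪ Q).ncard = P.ncard + Q.ncard :=
  ncard_union_eq <| Set.disjoint_left.2 fun U hU hU' =>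
    hP.ne_bot hm hU (disjoint_self.1 (hPQ U hU U hU'))

theorem exists_graph_union {E : Type*} [Field E] [Algebra F E] [Finite E] {P : Set (Submodule F E)}
    (hP : IsPartialSpread F m P) (hm : 0 < m) (hW : finrank F W = m) {ι : W →ₗ[F] E}
    (hι : Injective ι) :
    ∃ P' : Set (Submodule F (W × E)), IsPartialSpread F m P' ∧ P'.ncard = Nat.card E + P.ncard := by
  have : Finite W := Finite.of_injective ι hι
  set G : E → Submodule F (W × E) := fun a => (a • ι).graph
  have hGdisj : Pairwise (Disjoint on G) := fun a b hab => by
    apply LinearMap.disjoint_graph_of_injective_sub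
    intro x y hxy
    have : (a - b) * ι x = (a - b) * ι y := by simpa [sub_mul] using hxy
    exact hι (mul_left_cancel₀ (sub_ne_zero.2 hab) this)
  have hG : IsPartialSpread F m (range G) := by
    refine ⟨?_, hGdisj.range_pairwise⟩
    rintro _ ⟨a, rfl⟩
    exact (a • ι).finrank_graph.trans hW
  have hGinj : Injective G := fun a b hab => by
    by_contra hne
    have hdisj : Disjoint (G a) (G b) := hGdisj hne
    rw [← hab] at hdisj
    exact hG.ne_bot hm (mem_range_self a) (disjoint_self.1 hdisj)
  have hinr : Injective (LinearMap.inr F W E) := LinearMap.inr_injective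
  have hcross : ∀ U ∈ range G, ∀ U' ∈ Submodule.map (LinearMap.inr F W E) '' P, Disjoint U U' := by
    rintro _ ⟨a, rfl⟩ _ ⟨U, -, rfl⟩
    exact LinearMap.disjoint_graph_map_inr _ _
  refine ⟨_, hG.union (hP.map hinr) hcross, ?_⟩
  rw [hG.ncard_union hm hcross, ncard_range_of_injective hGinj,
    ncard_image_of_injective _ (map_injective_of_injective hinr)]

theorem exists_prod [Finite F] (hP : IsPartialSpread F m P) (hm : 0 < m) (hW : finrank F W = m)
    (hmV : m ≤ finrank F V) :
    ∃ P' : Set (Submodule F (W × V)), IsPartialSpread F m P' ∧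
      P'.ncard = Nat.card F ^ finrank F V + P.ncard := by
  have : FiniteDimensional F W := Module.finite_of_finrank_pos (by omega)
  have : FiniteDimensional F V := Module.finite_of_finrank_pos (by omega)
  have : NeZero (finrank F V) := ⟨by omega⟩
  have : Fact (ringChar F).Prime := ⟨CharP.char_is_prime F _⟩
  have hE := FiniteField.finrank_extension F (ringChar F) (finrank F V)
  let e := LinearEquiv.ofFinrankEq V (FiniteField.Extension F (ringChar F) (finrank F V)) hE.symm
  obtain ⟨ι, hι⟩ := finrank_le_iff_exists_linearMap.1 (hW.trans_le (hmV.trans_eq hE.symm))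
  obtain ⟨P', hP', hcard⟩ := (hP.map e.injective).exists_graph_union hm hW hι
  let e' := (LinearEquiv.refl F W).prodCongr e.symm
  refine ⟨_, hP'.map e'.injective, ?_⟩
  rw [ncard_image_of_injective _ (map_injective_of_injective e'.injective), hcard,
    FiniteField.natCard_extension,
    ncard_image_of_injective _ (map_injective_of_injective e.injective)]

end IsPartialSpread

theorem exists_isPartialSpread_ncard_eq {F V : Type*} [Field F] [Finite F] [AddCommGroup V]
    [Module F V] {m r h : ℕ} (hm : 0 < m) (hh : 1 ≤ h) (hV : finrank F V = h * m + r) :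
    ∃ P : Set (Submodule F V), IsPartialSpread F m P ∧
      P.ncard = 1 + ∑ i ∈ Finset.Ico 1 h, Nat.card F ^ (i * m + r) := by
  have : FiniteDimensional F V := Module.finite_of_finrank_pos (by rw [hV]; positivity)
  suffices ∀ h ≥ 1, ∃ P : Set (Submodule F (Fin (h * m + r) → F)), IsPartialSpread F m P ∧
      P.ncard = 1 + ∑ i ∈ Finset.Ico 1 h, Nat.card F ^ (i * m + r) by
    obtain ⟨P, hP, hcard⟩ := this h hh
    let e := LinearEquiv.ofFinrankEq (Fin (h * m + r) → F) V (by rw [finrank_fin_fun, hV])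
    refine ⟨_, hP.map e.injective, ?_⟩
    rw [ncard_image_of_injective _ (map_injective_of_injective e.injective), hcard]
  refine Nat.le_induction ?_ fun h hh ⟨P, hP, hcard⟩ => ?_
  · obtain ⟨ι, hι⟩ := finrank_le_iff_exists_linearMap.1
      (by simp : finrank F (Fin m → F) ≤ finrank F (Fin (1 * m + r) → F))
    refine ⟨{LinearMap.range ι}, ⟨?_, pairwise_singleton _ _⟩, by simp⟩
    rintro U rfl
    rw [LinearMap.finrank_range_of_inj hι, finrank_fin_fun]
  · obtain ⟨P', hP', hcard'⟩ := hP.exists_prod (W := Fin m → F) hm (finrank_fin_fun F)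
      (by rw [finrank_fin_fun]; nlinarith)
    let e := LinearEquiv.ofFinrankEq (R := F) ((Fin m → F) × (Fin (h * m + r) → F))
      (Fin ((h + 1) * m + r) → F) (by simp only [Module.finrank_prod, finrank_fin_fun]; ring)
    refine ⟨_, hP'.map e.injective, ?_⟩
    rw [ncard_image_of_injective _ (map_injective_of_injective e.injective), hcard', hcard,
      Finset.sum_Ico_succ_top hh, finrank_fin_fun]
    ring

theorem Nat.one_add_sum_Ico_pow_eq {q m r h : ℕ} (hq : 2 ≤ q) (hm : 0 < m) (hh : 1 ≤ h) :
    1 + ∑ i ∈ Finset.Ico 1 h, q ^ (i * m + r) =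
      (q ^ (h * m + r) - q ^ r) / (q ^ m - 1) - q ^ r + 1 := by
  have hqm : 2 ≤ q ^ m := hq.trans (Nat.le_self_pow hm.ne' q)
  have hgeom : (∑ i ∈ Finset.range h, q ^ (i * m + r)) * (q ^ m - 1) = q ^ (h * m + r) - q ^ r := by
    have hterm : ∀ i, q ^ (i * m + r) = q ^ r * (q ^ m) ^ i := fun i => by ring
    simp only [hterm, ← Finset.mul_sum, mul_assoc, geom_sum_mul_of_one_le (by omega : 1 ≤ q ^ m),
      Nat.mul_sub, mul_one]
  rw [Nat.div_eq_of_eq_mul_left (by omega) hgeom.symm, Finset.sum_range_eq_add_Ico _ (by omega),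
    zero_mul, zero_add]
  omega

theorem sunflower_code_construction_general
    (q : ℕ) (F : Type) [Field F] [Fintype F]
    (hF : Fintype.card F = q) (k n c h r : ℕ) (hk : 1 ≤ k) (hkn : k < n)
    (hc2 : c ≤ k - 1)
    (hhr : n - c = h * (k - c) + r) (hh : 2 ≤ h) :
    ∃ (C : Set (Submodule F (Fin n → F))) (Z : Submodule F (Fin n → F)),
      2 ≤ C.ncard ∧ (∀ U ∈ C, Module.finrank F U = k) ∧
      (∀ U ∈ C, ∀ V ∈ C, U ≠ V → U ⊓ V = Z) ∧ Module.finrank F Z = c ∧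
      C.ncard = (q ^ (n - c) - q ^ r) / (q ^ (k - c) - 1) - q ^ r + 1 := by
  have hm : 0 < k - c := by omega
  obtain ⟨P, hP, hPcard⟩ := exists_isPartialSpread_ncard_eq (F := F) (V := Fin (n - c) → F)
    (h := h) hm (by omega) (by rw [finrank_fin_fun, hhr])
  set π := LinearMap.funLeft F F (Fin.castLE (Nat.sub_le n c))
  have hπ : Surjective π := LinearMap.funLeft_surjective_of_injective _ _ _ (Fin.castLE_injective _)
  have hker : finrank F (LinearMap.ker π) = c := by
    have := π.finrank_range_add_finrank_ker
    rw [LinearMap.range_eq_top.2 hπ, finrank_top, finrank_fin_fun, finrank_fin_fun] at this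
    omega
  have hcard : (comap π '' P).ncard = 1 + ∑ i ∈ Finset.Ico 1 h, q ^ (i * (k - c) + r) := by
    rw [ncard_image_of_injective _ (comap_injective_of_surjective hπ), hPcard,
      Nat.card_eq_fintype_card, hF]
  refine ⟨comap π '' P, LinearMap.ker π, ?_, ?_, ?_, hker, ?_⟩
  · have hterm := Finset.single_le_sum (fun i _ => Nat.zero_le (q ^ (i * (k - c) + r)))
      (Finset.mem_Ico.2 ⟨le_rfl, hh⟩)
    have hpos : 0 < q ^ (1 * (k - c) + r) := pow_pos (hF ▸ Fintype.card_pos) _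
    omega
  · rintro _ ⟨U, hU, rfl⟩
    rw [Submodule.finrank_comap_of_surjective hπ, hP.1 U hU, hker]
    omega
  · rintro _ ⟨U, hU, rfl⟩ _ ⟨U', hU', rfl⟩ hne
    rw [← comap_inf, disjoint_iff.1 (hP.2 hU hU' (ne_of_apply_ne _ hne)), comap_bot]
  · rw [hcard, Nat.one_add_sum_Ico_pow_eq (hF ▸ Fintype.one_lt_card) hm (by omega), hhr]

/-- Systematic construction of sunflower codes: for any admissible parameters
`k, n, c`, writing `n - c = h (k - c) + r` with `0 ≤ r ≤ k - c - 1` and `h ≥ 2`,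
there is a sunflower in `G_q(k,n)` with center of dimension `c` and cardinality
`(q^{n-c} - q^r)/(q^{k-c} - 1) - q^r + 1`. -/
theorem sunflower_code_construction
    (q : ℕ) (hq : IsPrimePow q) (F : Type) [Field F] [Fintype F]
    (hF : Fintype.card F = q) (k n c h r : ℕ) (hk : 1 ≤ k) (hkn : k < n)
    (hc1 : 2 * k ≤ n + c) (hc2 : c ≤ k - 1)
    (hhr : n - c = h * (k - c) + r) (hrk : r ≤ k - c - 1) (hh : 2 ≤ h) :
    ∃ (C : Set (Submodule F (Fin n → F))) (Z : Submodule F (Fin n → F)),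
      2 ≤ C.ncard ∧ (∀ U ∈ C, Module.finrank F U = k) ∧
      (∀ U ∈ C, ∀ V ∈ C, U ≠ V → U ⊓ V = Z) ∧ Module.finrank F Z = c ∧
      C.ncard = (q ^ (n - c) - q ^ r) / (q ^ (k - c) - 1) - q ^ r + 1 :=
  sunflower_code_construction_general q F hF k n c h r hk hkn hc2 hhr hh
end
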